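/- arXiv:1410.0859 — 4 statements merged into one kernel-verified Lean document; each statement's English description precedes it below -/
import Mathlib

section
/- Let R be a commutative ring, s ∈ R an invertible element, and A an associative R-algebra. Let P : ℤ² → A be a function, and for x, y ∈ ℤ² write d(x,y) := x₁y₂ − x₂y₁; say that the pair (x,y) satisfies relation (∗) if the ring commutator [P(x), P(y)] := P(x)P(y) − P(y)P(x) equals {d(x,y)}·P(x+y), where {d} := s^d − s^{−d}. Suppose a, b, x, y ∈ ℤ² are such that a + b = x, the element {d(a,b)} is invertible in R, the pair (a,b) satisfies (∗), and the four pairs (y,a), (y,b), (y+a, b), (y+b, a) all satisfy (∗). Then the pair (x,y) satisfies (∗). -/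
/-!
Multiply the desired relation by the invertible scalar `{d(a,b)}`: by `(∗)` for `(a,b)`,
`{d(a,b)}·[P(a+b), P(y)] = [[P(a),P(b)], P(y)]`, and the Jacobi identity together with the four
relations involving `y` turns this into `({n}{m-D} - {m}{n+D})·P(a+b+y)`, where
`m = d(y,a)`, `n = d(y,b)`, `D = d(a,b)`. Expanding both products by
`{p}{q} = {p+q}⁺ - {p-q}⁺` shows the coefficient equals `{D}{-(m+n)} = {D}{d(a+b,y)}`.
-/

/-- `{d} := s^d - s^{-d}` for an invertible element `s` of a commutative ring. -/
def brace {R : Type*} [CommRing R] (s : Rˣ) (d : ℤ) : R :=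
  ((s ^ d : Rˣ) : R) - ((s ^ (-d) : Rˣ) : R)

/-- The determinant `d(x,y) = x₁ y₂ − x₂ y₁` of the matrix with columns `x, y ∈ ℤ²`. -/
def ddet (x y : ℤ × ℤ) : ℤ := x.1 * y.2 - x.2 * y.1

/-- The pair `(x, y)` satisfies relation (∗): `[P(x),P(y)] = {d(x,y)}·P(x+y)`. -/
def SatRel {R : Type*} [CommRing R] {A : Type*} [Ring A] [Algebra R A]
    (s : Rˣ) (P : ℤ × ℤ → A) (x y : ℤ × ℤ) : Prop :=
  P x * P y - P y * P x = brace s (ddet x y) • P (x + y)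

section Brace

variable {R : Type*} [CommRing R] (s : Rˣ)

/-- `{d}⁺ := s^d + s^{-d}`. -/
def braceSum (d : ℤ) : R :=
  ((s ^ d : Rˣ) : R) + ((s ^ (-d) : Rˣ) : R)

theorem braceSum_neg (d : ℤ) : braceSum s (-d) = braceSum s d := by
  rw [braceSum, braceSum, neg_neg, add_comm]

theorem brace_mul_brace (m n : ℤ) :
    brace s m * brace s n = braceSum s (m + n) - braceSum s (m - n) := by
  simp only [brace, braceSum, sub_mul, mul_sub, ← Units.val_mul, ← zpow_add]
  ring_nf

theorem brace_mul_brace_sub_brace_mul_brace (m n D : ℤ) :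
    brace s n * brace s (m - D) - brace s m * brace s (n + D) = brace s D * brace s (-(m + n)) := by
  have h₁ : braceSum s (m - (n + D)) = braceSum s (n - (m - D)) := by
    rw [← braceSum_neg]; ring_nf
  have h₂ : braceSum s (D + -(m + n)) = braceSum s (n + (m - D)) := by
    rw [← braceSum_neg]; ring_nf
  have h₃ : braceSum s (D - -(m + n)) = braceSum s (m + (n + D)) := by
    ring_nf
  rw [brace_mul_brace, brace_mul_brace, brace_mul_brace, h₁, h₂, h₃]
  ring

end Brace

theorem ddet_add_left (u v w : ℤ × ℤ) : ddet (u + v) w = ddet u w + ddet v w := by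
  simp only [ddet, Prod.fst_add, Prod.snd_add]; ring

theorem ddet_swap (u v : ℤ × ℤ) : ddet v u = -ddet u v := by
  simp only [ddet]; ring

theorem brace_ddet_jacobi {R : Type*} [CommRing R] (s : Rˣ) (a b y : ℤ × ℤ) :
    brace s (ddet y b) * brace s (ddet (y + b) a) - brace s (ddet y a) * brace s (ddet (y + a) b)
      = brace s (ddet a b) * brace s (ddet (a + b) y) := by
  rw [ddet_add_left, ddet_add_left, ddet_add_left, ddet_swap y a, ddet_swap y b, ddet_swap a b,
    ← sub_eq_add_neg, ← neg_add, brace_mul_brace_sub_brace_mul_brace]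

theorem satRel_iff_lie {R : Type*} [CommRing R] {A : Type*} [Ring A] [Algebra R A]
    (s : Rˣ) (P : ℤ × ℤ → A) (x y : ℤ × ℤ) :
    SatRel s P x y ↔ ⁅P x, P y⁆ = brace s (ddet x y) • P (x + y) := by
  rw [SatRel, Ring.lie_def]

theorem smul_lie_eq_of_lie_eq {R L : Type*} [CommRing R] [LieRing L] [LieAlgebra R L]
    {u v w z zu zv t : L} {c α β γ δ : R}
    (huv : ⁅u, v⁆ = c • w) (hzu : ⁅z, u⁆ = α • zu) (hzv : ⁅z, v⁆ = β • zv)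
    (hzuv : ⁅zu, v⁆ = γ • t) (hzvu : ⁅zv, u⁆ = δ • t) :
    c • ⁅w, z⁆ = (β * δ - α * γ) • t := by
  calc c • ⁅w, z⁆ = ⁅⁅u, v⁆, z⁆ := by rw [huv, smul_lie]
    _ = ⁅u, ⁅v, z⁆⁆ - ⁅v, ⁅u, z⁆⁆ := lie_lie u v z
    _ = β • ⁅zv, u⁆ - α • ⁅zu, v⁆ := by
      rw [← lie_skew v z, ← lie_skew u z, hzv, hzu, lie_neg, lie_neg, lie_smul, lie_smul,
        ← lie_skew u zv, ← lie_skew v zu, smul_neg, smul_neg, neg_neg, neg_neg]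
    _ = (β * δ - α * γ) • t := by rw [hzvu, hzuv, smul_smul, smul_smul, sub_smul]

theorem stmt_0 {R : Type*} [CommRing R] {A : Type*} [Ring A] [Algebra R A]
    (s : Rˣ) (P : ℤ × ℤ → A) (a b x y : ℤ × ℤ)
    (hab : a + b = x)
    (hunit : IsUnit (brace s (ddet a b)))
    (hab_rel : SatRel s P a b)
    (hya : SatRel s P y a)
    (hyb : SatRel s P y b)
    (hyab : SatRel s P (y + a) b)
    (hyba : SatRel s P (y + b) a) :
    SatRel s P x y := by
  subst hab
  rw [satRel_iff_lie] at *
  rw [add_right_comm] at hyba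
  let _ : LieRing A := LieRing.ofAssociativeRing
  rw [← hunit.smul_left_cancel, smul_lie_eq_of_lie_eq hab_rel hya hyb hyab hyba,
    brace_ddet_jacobi, mul_smul, add_comm (a + b) y, add_assoc]
end

section
/- Let λ be a partition, identified with its Young diagram, the set of cells (i,j) ∈ ℤ² with 1 ≤ i and 1 ≤ j ≤ λ_i; the content of a cell (i,j) is c(i,j) = j − i. Call a cell y ∉ λ addable if λ ∪ {y} is again a Young diagram, and a cell x ∈ λ removable if λ ∖ {x} is again a Young diagram. Then the following identity holds in the Laurent polynomial ring ℤ[u, u^{−1}]: (sum over addable cells y of λ of u^{2c(y)}) − (sum over removable cells x of λ of u^{2c(x)}) = 1 + (u − u^{−1})² · (sum over cells z ∈ λ of u^{2c(z)}). -/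
/-!
For every function `f` on cells,
`∑_{y addable} f y - ∑_{x removable} f (x + (1,1))
  = f 0 + ∑_{z ∈ λ} (f (z + (1,0)) + f (z + (0,1)) - f (z + (1,1)) - f z)`.
Comparing the coefficients of `f p` on both sides involves only the `2 × 2` window of cells with
corners `p - (1,1)` and `p`, which a lower set meets in one of five patterns. For the weight
`f (i, j) = u^(2(j-i))`, which depends only on the content, the shift by `(1,1)` preserves `f` and the
bracket equals `(u - u⁻¹)² f z`.
-/

open LaurentPolynomial Finset

section LowerSet

variable {α : Type*} [PartialOrder α] {s : Set α} {a : α}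

theorem IsLowerSet.isLowerSet_insert_iff (hs : IsLowerSet s) :
    IsLowerSet (insert a s) ↔ Set.Iio a ⊆ s := by
  refine ⟨fun h b hb => ?_, fun h b c hcb hb => ?_⟩
  · exact (h hb.le (Set.mem_insert a s)).resolve_left hb.ne
  · rcases hb with rfl | hb
    · exact (eq_or_lt_of_le hcb).imp id (@h c)
    · exact Or.inr (hs hcb hb)

theorem IsLowerSet.isLowerSet_diff_singleton_iff (hs : IsLowerSet s) :
    IsLowerSet (s \ {a}) ↔ ∀ b ∈ s, ¬a < b := by
  refine ⟨fun h b hb hab => ?_, fun h b c hcb hb => ⟨hs hcb hb.1, ?_⟩⟩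
  · exact (h hab.le ⟨hb, hab.ne'⟩).2 rfl
  · rintro rfl
    exact h b hb.1 (lt_of_le_of_ne hcb fun hcb' => hb.2 hcb'.symm)

end LowerSet

theorem Finset.sum_eq_sum_ite_smul_of_subset {ι M : Type*} [DecidableEq ι] [AddCommGroup M]
    {s t : Finset ι} (h : s ⊆ t) (f : ι → M) :
    ∑ i ∈ s, f i = ∑ i ∈ t, (if i ∈ s then (1 : ℤ) else 0) • f i := by
  simp only [ite_smul, one_smul, zero_smul, sum_ite_mem, inter_eq_right.2 h]

theorem LaurentPolynomial.sq_T_one_sub_T_neg_one_mul_T {R : Type*} [CommRing R] (n : ℤ) :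
    (T 1 - T (-1) : R[T;T⁻¹]) ^ 2 * T n = T (n + 2) + T (n - 2) - 2 * T n := by
  have h1 : (T 1 * T (-1) : R[T;T⁻¹]) = 1 := by rw [← T_add]; simp
  have h2 : (T (n + 2) : R[T;T⁻¹]) = T 1 * T 1 * T n := by rw [← T_add, ← T_add]; ring_nf
  have h3 : (T (n - 2) : R[T;T⁻¹]) = T (-1) * T (-1) * T n := by rw [← T_add, ← T_add]; ring_nf
  rw [h2, h3]
  linear_combination (-2 * T n) * h1

namespace YoungDiagram

variable (μ : YoungDiagram)

theorem isLowerSet_insert_iff {i j : ℕ} :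
    IsLowerSet (↑(insert (i, j) μ.cells) : Set (ℕ × ℕ)) ↔
      (0 < i → (i - 1, j) ∈ μ) ∧ (0 < j → (i, j - 1) ∈ μ) := by
  rw [coe_insert, μ.isLowerSet.isLowerSet_insert_iff]
  refine ⟨fun h => ⟨fun hi => h ?_, fun hj => h ?_⟩, ?_⟩
  · exact Prod.lt_iff.2 (Or.inl ⟨Nat.sub_lt hi one_pos, le_rfl⟩)
  · exact Prod.lt_iff.2 (Or.inr ⟨le_rfl, Nat.sub_lt hj one_pos⟩)
  · rintro ⟨hi, hj⟩ ⟨a, b⟩ hab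
    rcases Prod.lt_iff.1 hab with ⟨ha, hb⟩ | ⟨ha, hb⟩
    · exact μ.up_left_mem (Nat.le_sub_one_of_lt ha) hb (hi (by omega))
    · exact μ.up_left_mem ha (Nat.le_sub_one_of_lt hb) (hj (by omega))

theorem isLowerSet_erase_iff {i j : ℕ} :
    IsLowerSet (↑(μ.cells.erase (i, j)) : Set (ℕ × ℕ)) ↔ (i + 1, j) ∉ μ ∧ (i, j + 1) ∉ μ := by
  rw [coe_erase, μ.isLowerSet.isLowerSet_diff_singleton_iff]
  refine ⟨fun h => ⟨fun hi => h _ hi ?_, fun hj => h _ hj ?_⟩, ?_⟩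
  · exact Prod.lt_iff.2 (Or.inl ⟨Nat.lt_succ_self i, le_rfl⟩)
  · exact Prod.lt_iff.2 (Or.inr ⟨le_rfl, Nat.lt_succ_self j⟩)
  · rintro ⟨hi, hj⟩ ⟨a, b⟩ hab hlt
    rcases Prod.lt_iff.1 hlt with ⟨ha, hb⟩ | ⟨ha, hb⟩
    · exact hi (μ.up_left_mem ha hb hab)
    · exact hj (μ.up_left_mem ha hb hab)

theorem indicator_addable_sub_indicator_removable {Add Rem : Finset (ℕ × ℕ)}
    (hAdd : ∀ y : ℕ × ℕ, y ∈ Add ↔ y ∉ μ ∧ IsLowerSet (↑(insert y μ.cells) : Set (ℕ × ℕ)))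
    (hRem : ∀ x : ℕ × ℕ, x ∈ Rem ↔ x ∈ μ ∧ IsLowerSet (↑(μ.cells.erase x) : Set (ℕ × ℕ)))
    (p : ℕ × ℕ) :
    ((if p ∈ Add then 1 else 0 : ℤ) - if p ∈ Rem.map (addRightEmbedding (1, 1)) then 1 else 0) =
      (if p ∈ ({0} : Finset (ℕ × ℕ)) then 1 else 0)
        + (if p ∈ μ.cells.map (addRightEmbedding (1, 0)) then 1 else 0)
        + (if p ∈ μ.cells.map (addRightEmbedding (0, 1)) then 1 else 0)
        - (if p ∈ μ.cells.map (addRightEmbedding (1, 1)) then 1 else 0)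
        - if p ∈ μ.cells then 1 else 0 := by
  classical
  have hrow : ∀ i j, (i, j + 1) ∈ μ → (i, j) ∈ μ := fun i j => μ.up_left_mem le_rfl j.le_succ
  have hcol : ∀ i j, (i + 1, j) ∈ μ → (i, j) ∈ μ := fun i j => μ.up_left_mem i.le_succ le_rfl
  -- After the case split only the window cells occur; by `hrow`, `hcol` five patterns remain.
  obtain ⟨_ | a, _ | b⟩ := p <;>
    simp only [Finset.mem_map, Prod.exists, hAdd, hRem, isLowerSet_insert_iff,
      isLowerSet_erase_iff] <;>
    simp <;>
    split_ifs <;> grind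

theorem sum_addable_sub_sum_removable {M : Type*} [AddCommGroup M] (f : ℕ × ℕ → M)
    {Add Rem : Finset (ℕ × ℕ)}
    (hAdd : ∀ y : ℕ × ℕ, y ∈ Add ↔ y ∉ μ ∧ IsLowerSet (↑(insert y μ.cells) : Set (ℕ × ℕ)))
    (hRem : ∀ x : ℕ × ℕ, x ∈ Rem ↔ x ∈ μ ∧ IsLowerSet (↑(μ.cells.erase x) : Set (ℕ × ℕ))) :
    ∑ y ∈ Add, f y - ∑ x ∈ Rem, f (x + (1, 1)) =
      f 0 + ∑ z ∈ μ.cells, (f (z + (1, 0)) + f (z + (0, 1)) - f (z + (1, 1)) - f z) := by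
  classical
  set R₁₁ := Rem.map (addRightEmbedding (1, 1))
  set C₁₀ := μ.cells.map (addRightEmbedding (1, 0))
  set C₀₁ := μ.cells.map (addRightEmbedding (0, 1))
  set C₁₁ := μ.cells.map (addRightEmbedding (1, 1))
  set U := Add ∪ R₁₁ ∪ {0} ∪ C₁₀ ∪ C₀₁ ∪ C₁₁ ∪ μ.cells
  have hU : ∀ s ⊆ U, ∑ p ∈ s, f p = ∑ p ∈ U, (if p ∈ s then (1 : ℤ) else 0) • f p :=
    fun s hs => sum_eq_sum_ite_smul_of_subset hs f
  obtain ⟨hA, hR, h0, h10, h01, h11, hμ⟩ : Add ⊆ U ∧ R₁₁ ⊆ U ∧ {0} ⊆ U ∧ C₁₀ ⊆ U ∧ C₀₁ ⊆ U ∧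
      C₁₁ ⊆ U ∧ μ.cells ⊆ U := by
    refine ⟨?_, ?_, ?_, ?_, ?_, ?_, ?_⟩ <;> intro p <;> simp +contextual [U]
  calc ∑ y ∈ Add, f y - ∑ x ∈ Rem, f (x + (1, 1))
      = ∑ p ∈ Add, f p - ∑ p ∈ R₁₁, f p := by simp only [R₁₁, sum_map, addRightEmbedding_apply]
    _ = ∑ p ∈ U, ((if p ∈ Add then 1 else 0 : ℤ) - if p ∈ R₁₁ then 1 else 0) • f p := by
        simp only [hU _ hA, hU _ hR, sub_smul, sum_sub_distrib]
    _ = ∑ p ∈ U, ((if p ∈ ({0} : Finset (ℕ × ℕ)) then 1 else 0 : ℤ)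
          + (if p ∈ C₁₀ then 1 else 0) + (if p ∈ C₀₁ then 1 else 0)
          - (if p ∈ C₁₁ then 1 else 0) - if p ∈ μ.cells then 1 else 0) • f p :=
        sum_congr rfl fun p _ => by rw [μ.indicator_addable_sub_indicator_removable hAdd hRem p]
    _ = _ := by
        simp only [add_smul, sub_smul, sum_add_distrib, sum_sub_distrib, ← hU _ h0, ← hU _ h10,
          ← hU _ h01, ← hU _ h11, ← hU _ hμ, sum_singleton, C₁₀, C₀₁, C₁₁, sum_map,
          addRightEmbedding_apply]
        abel

end YoungDiagram

theorem stmt_3 (μ : YoungDiagram) (Add Rem : Finset (ℕ × ℕ))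
    -- `Add` is the set of addable cells of μ
    (hAdd : ∀ y : ℕ × ℕ,
      y ∈ Add ↔ y ∉ μ ∧ IsLowerSet (↑(insert y μ.cells) : Set (ℕ × ℕ)))
    -- `Rem` is the set of removable cells of μ
    (hRem : ∀ x : ℕ × ℕ,
      x ∈ Rem ↔ x ∈ μ ∧ IsLowerSet (↑(μ.cells.erase x) : Set (ℕ × ℕ))) :
    (∑ y ∈ Add, (T (2 * ((y.2 : ℤ) - (y.1 : ℤ))) : LaurentPolynomial ℤ))
      - ∑ x ∈ Rem, (T (2 * ((x.2 : ℤ) - (x.1 : ℤ))) : LaurentPolynomial ℤ)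
    = 1 + (T 1 - T (-1)) ^ 2
        * ∑ z ∈ μ.cells, (T (2 * ((z.2 : ℤ) - (z.1 : ℤ))) : LaurentPolynomial ℤ) := by
  set w : ℕ × ℕ → LaurentPolynomial ℤ := fun z => T (2 * ((z.2 : ℤ) - (z.1 : ℤ)))
  have hdiag (z : ℕ × ℕ) : w (z + (1, 1)) = w z := by
    simp only [w, Prod.fst_add, Prod.snd_add]
    push_cast
    ring_nf
  have hlap (z : ℕ × ℕ) :
      w (z + (1, 0)) + w (z + (0, 1)) - w (z + (1, 1)) - w z = (T 1 - T (-1)) ^ 2 * w z := by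
    rw [sq_T_one_sub_T_neg_one_mul_T, hdiag]
    simp only [w, Prod.fst_add, Prod.snd_add]
    push_cast
    ring_nf
  calc ∑ y ∈ Add, w y - ∑ x ∈ Rem, w x
      = ∑ y ∈ Add, w y - ∑ x ∈ Rem, w (x + (1, 1)) := by simp only [hdiag]
    _ = w 0 + ∑ z ∈ μ.cells, (w (z + (1, 0)) + w (z + (0, 1)) - w (z + (1, 1)) - w z) :=
        μ.sum_addable_sub_sum_removable w hAdd hRem
    _ = 1 + (T 1 - T (-1)) ^ 2 * ∑ z ∈ μ.cells, w z := by
        have hw0 : w 0 = 1 := by simp [w]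
        simp only [hlap, ← mul_sum, hw0]
end

section
/- Let K = ℚ(q) be the field of rational functions in one variable q over ℚ, and let B be the commutative ring obtained from the Laurent polynomial ring K[t, t^{−1}] by adjoining countably many polynomial indeterminates u_1, u_2, u_3, … . For each integer r ≥ 1 set α_r := (1 − q^r)(1 − t^{−r})(1 − q^{−r}t^r)/r ∈ B. Define elements θ_n ∈ B for n ≥ 1 by the identity of formal power series in a variable z over B: 1 + Σ_{n≥1} θ_n zⁿ = exp(Σ_{r≥1} α_r u_r z^r), where exp(f) := Σ_{m≥0} f^m/m! for a power series f with zero constant term. Then for every n ≥ 1, the element θ_n − [n]²·α_1·u_n lies in the ideal of B generated by (t − q)², where [n]² := (qⁿ − 2 + q^{−n})/(q − 2 + q^{−1}) ∈ K. -/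
noncomputable section

/-- The field `K = ℚ(q)`. -/
abbrev KK : Type := RatFunc ℚ

/-- The ring `B`: Laurent polynomials in `t` over `K`, with countably many
polynomial indeterminates `u_1, u_2, …` adjoined. -/
abbrev BB : Type := MvPolynomial ℕ (LaurentPolynomial KK)

/-- The element `q ∈ K`. -/
def qq : KK := RatFunc.X

open LaurentPolynomial

/-- `α_r = (1 − q^r)(1 − t^{−r})(1 − q^{−r}t^r)/r ∈ K[t,t⁻¹] ⊆ B`. -/
def alphaE (r : ℕ) : LaurentPolynomial KK :=
  C ((r : KK)⁻¹) *
    ((1 - C (qq ^ r)) * (1 - T (-(r : ℤ))) * (1 - C (qq ^ (-(r : ℤ))) * T (r : ℤ)))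

/-- The power series `f = Σ_{r ≥ 1} α_r u_r z^r` over `B` (zero constant term). -/
def fSer : PowerSeries BB :=
  PowerSeries.mk fun r =>
    if r = 0 then 0 else MvPolynomial.C (alphaE r) * MvPolynomial.X r

/-- `θ_n`, the coefficient of `zⁿ` in `exp(f) = Σ_{m ≥ 0} f^m / m!`.  Since `f` has zero
constant term, `coeff n (f^m) = 0` for `m > n`, so the sum may be truncated at `m = n`,
and the coefficient of `z⁰` is `1`, i.e. `exp(f) = 1 + Σ_{n ≥ 1} θ_n zⁿ`. -/
def thetaE (n : ℕ) : BB :=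
  ∑ m ∈ Finset.range (n + 1),
    (m.factorial : ℚ)⁻¹ • PowerSeries.coeff n (fSer ^ m)

/-- `[n]² = (qⁿ − 2 + q^{−n})/(q − 2 + q^{−1}) ∈ K`. -/
def qint_sq (n : ℕ) : KK :=
  (qq ^ n - 2 + qq ^ (-(n : ℤ))) / (qq - 2 + qq⁻¹)

/-! Every `α_r` vanishes at `t = q`, so all coefficients of `f` lie in `I = (t - q)`, those of
`f^m` lie in `I^m`, and modulo `I²` only the linear term `α_n u_n` of `exp f` survives.
Moreover `t^r α_r = (t - q) β_r(t)` with `β_r(q) = (q^r - 1)²/q`; the ratio `β_n(q) / (q^{n-1} β_1(q))`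
is exactly `[n]²`, so `α_n - [n]² α_1` vanishes to second order at `t = q`. -/

theorem PowerSeries.coeff_pow_mem_pow {R : Type*} [CommRing R] {I : Ideal R} {f : PowerSeries R}
    (hf : ∀ k, PowerSeries.coeff k f ∈ I) (m k : ℕ) : PowerSeries.coeff k (f ^ m) ∈ I ^ m := by
  induction m generalizing k with
  | zero => simp
  | succ m ih =>
    rw [pow_succ, pow_succ, PowerSeries.coeff_mul]
    exact Ideal.sum_mem _ fun p _ => Ideal.mul_mem_mul (ih p.1) (hf p.2)

lemma qq_ne_zero : qq ≠ 0 := RatFunc.X_ne_zero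

lemma qq_ne_one : qq ≠ 1 := fun h => by
  have hdeg : qq.intDegree = 1 := RatFunc.intDegree_X
  rw [h, RatFunc.intDegree_one] at hdeg
  exact zero_ne_one hdeg

lemma qint_sq_eq (n : ℕ) : qint_sq n = qq * (qq ^ n - 1) ^ 2 / (qq ^ n * (qq - 1) ^ 2) := by
  have hq0 := qq_ne_zero
  have hq1 := sub_ne_zero.mpr qq_ne_one
  have hnum : qq ^ n - 2 + (qq ^ n)⁻¹ = (qq ^ n - 1) ^ 2 / qq ^ n := by field_simp; ring
  have hden : qq - 2 + qq⁻¹ = (qq - 1) ^ 2 / qq := by field_simp; ring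
  rw [qint_sq, zpow_neg, zpow_natCast, hnum, hden]
  field_simp

section

open Polynomial hiding C

def alphaPoly (r : ℕ) : KK[X] :=
  Polynomial.C ((r : KK)⁻¹ * (1 - qq ^ r)) * (X ^ r - 1) *
    (1 - Polynomial.C (qq ^ (-(r : ℤ))) * X ^ r)

def betaPoly (r : ℕ) : KK[X] :=
  Polynomial.C (-((r : KK)⁻¹ * (1 - qq ^ r) * qq ^ (-(r : ℤ)))) * (X ^ r - 1) *
    ∑ i ∈ Finset.range r, X ^ i * Polynomial.C qq ^ (r - 1 - i)

lemma toLaurent_alphaPoly (r : ℕ) : toLaurent (alphaPoly r) = T r * alphaE r := by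
  have hT : (T r : LaurentPolynomial KK) * T (-(r : ℤ)) = 1 := by rw [← T_add]; simp
  simp only [alphaPoly, alphaE, map_mul, map_sub, map_one, toLaurent_C, toLaurent_X_pow]
  linear_combination (C ((r : KK)⁻¹) * (1 - C (qq ^ r)) *
    (1 - C (qq ^ (-(r : ℤ))) * T r)) * hT

lemma alphaPoly_eq_mul_betaPoly (r : ℕ) : alphaPoly r = (X - Polynomial.C qq) * betaPoly r := by
  have hq : Polynomial.C (qq ^ (-(r : ℤ))) * Polynomial.C qq ^ r = 1 := by
    rw [← map_pow, ← map_mul, zpow_neg, zpow_natCast, inv_mul_cancel₀ (pow_ne_zero _ qq_ne_zero),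
      map_one]
  have hgeom := geom_sum₂_mul X (Polynomial.C qq) r
  simp only [alphaPoly, betaPoly, map_neg, map_mul]
  linear_combination Polynomial.C (r : KK)⁻¹ * Polynomial.C (1 - qq ^ r) *
    (Polynomial.C (qq ^ (-(r : ℤ))) * (X ^ r - 1) * hgeom - (X ^ r - 1) * hq)

lemma eval_betaPoly {r : ℕ} (hr : r ≠ 0) : (betaPoly r).eval qq = (qq ^ r - 1) ^ 2 / qq := by
  obtain ⟨s, rfl⟩ : ∃ s, r = s + 1 := ⟨r - 1, by omega⟩
  have hq0 := qq_ne_zero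
  have hgeom := geom_sum₂_self qq (s + 1)
  simp only [betaPoly, eval_mul, eval_C, eval_sub, eval_pow, eval_X, eval_one, eval_finsetSum] at hgeom ⊢
  rw [hgeom, zpow_neg, zpow_natCast, Nat.add_sub_cancel]
  field_simp
  ring

lemma sq_dvd_alphaPoly_sub (m : ℕ) :
    (X - Polynomial.C qq) ^ 2 ∣
      alphaPoly (m + 1) - Polynomial.C (qint_sq (m + 1)) * X ^ m * alphaPoly 1 := by
  have hroot : (betaPoly (m + 1) - Polynomial.C (qint_sq (m + 1)) * X ^ m * betaPoly 1).IsRoot qq := by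
    have hq0 := qq_ne_zero
    have hq1 := sub_ne_zero.mpr qq_ne_one
    simp only [IsRoot, eval_sub, eval_mul, eval_C, eval_pow, eval_X,
      eval_betaPoly m.add_one_ne_zero, eval_betaPoly one_ne_zero, qint_sq_eq]
    field_simp
    ring
  rw [alphaPoly_eq_mul_betaPoly, alphaPoly_eq_mul_betaPoly, sq,
    show ∀ a b c : KK[X], (X - Polynomial.C qq) * a - b * ((X - Polynomial.C qq) * c)
      = (X - Polynomial.C qq) * (a - b * c) from fun _ _ _ => by ring]
  exact mul_dvd_mul_left _ (dvd_iff_isRoot.mpr hroot)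

end

lemma T_sub_C_dvd_alphaE (r : ℕ) : T 1 - C qq ∣ alphaE r := by
  rw [← (isUnit_T (r : ℤ)).dvd_mul_left, ← toLaurent_alphaPoly, alphaPoly_eq_mul_betaPoly, map_mul,
    map_sub, Polynomial.toLaurent_X, Polynomial.toLaurent_C]
  exact dvd_mul_right _ _

lemma sq_dvd_alphaE_sub {n : ℕ} (hn : 1 ≤ n) :
    (T 1 - C qq) ^ 2 ∣ alphaE n - C (qint_sq n) * alphaE 1 := by
  obtain ⟨m, rfl⟩ : ∃ m, n = m + 1 := ⟨n - 1, by omega⟩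
  have h := map_dvd Polynomial.toLaurent (sq_dvd_alphaPoly_sub m)
  have hT : (T ((m + 1 : ℕ) : ℤ) : LaurentPolynomial KK) = T m * T 1 := by rw [← T_add]; push_cast; rfl
  rw [← (isUnit_T ((m + 1 : ℕ) : ℤ)).dvd_mul_left]
  convert h using 1
  · simp only [map_pow, map_sub, Polynomial.toLaurent_X, Polynomial.toLaurent_C]
  · simp only [map_sub, map_mul, Polynomial.toLaurent_C, Polynomial.toLaurent_X_pow,
      toLaurent_alphaPoly, hT, Nat.cast_one]
    ring

lemma coeff_fSer_mem (k : ℕ) :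
    PowerSeries.coeff k fSer ∈ Ideal.span {(MvPolynomial.C (T 1 - C qq) : BB)} := by
  rw [Ideal.mem_span_singleton, fSer, PowerSeries.coeff_mk]
  split_ifs
  · exact dvd_zero _
  · exact (map_dvd MvPolynomial.C (T_sub_C_dvd_alphaE k)).mul_right _

lemma thetaE_sub_mem {n : ℕ} (hn : 1 ≤ n) :
    thetaE n - MvPolynomial.C (alphaE n) * MvPolynomial.X n
      ∈ Ideal.span {(MvPolynomial.C (T 1 - C qq) : BB)} ^ 2 := by
  have hlinear : (Nat.factorial 1 : ℚ)⁻¹ • PowerSeries.coeff n (fSer ^ 1)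
      = MvPolynomial.C (alphaE n) * MvPolynomial.X n := by
    simp [fSer, show n ≠ 0 by omega]
  rw [thetaE, ← Finset.add_sum_erase _ _ (Finset.mem_range.mpr (by omega : 1 < n + 1)), hlinear,
    add_sub_cancel_left]
  refine Ideal.sum_mem _ fun m hm => Submodule.smul_of_tower_mem _ _ ?_
  rcases m with _ | _ | m
  · simp [PowerSeries.coeff_one, show n ≠ 0 by omega]
  · simp at hm
  · exact Ideal.pow_le_pow_right (by omega) (PowerSeries.coeff_pow_mem_pow coeff_fSer_mem _ _)

theorem stmt_7 (n : ℕ) (hn : 1 ≤ n) :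
    thetaE n - MvPolynomial.C (C (qint_sq n) * alphaE 1) * MvPolynomial.X n
      ∈ Ideal.span {((MvPolynomial.C (T 1 - C qq) : BB)) ^ 2} := by
  rw [← Ideal.span_singleton_pow]
  have hsplit : thetaE n - MvPolynomial.C (C (qint_sq n) * alphaE 1) * MvPolynomial.X n
      = (thetaE n - MvPolynomial.C (alphaE n) * MvPolynomial.X n)
        + MvPolynomial.C (alphaE n - C (qint_sq n) * alphaE 1) * MvPolynomial.X n := by
    rw [map_sub]; ring
  rw [hsplit]
  refine add_mem (thetaE_sub_mem hn) ?_
  rw [Ideal.span_singleton_pow, Ideal.mem_span_singleton, ← map_pow]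
  exact (map_dvd MvPolynomial.C (sq_dvd_alphaE_sub hn)).mul_right _
end
end

section
/- Let K = ℚ(q) be the field of rational functions in one variable q over ℚ, and in the Laurent polynomial ring K[t, t^{−1}] set α_r := (1 − q^r)(1 − t^{−r})(1 − q^{−r}t^r)/r for r ≥ 1. Then for every n ≥ 1 the element α_n − [n]²·α_1, where [n]² := (qⁿ − 2 + q^{−n})/(q − 2 + q^{−1}) ∈ K, is divisible by (t − q)² in K[t, t^{−1}]. -/
noncomputable section

open LaurentPolynomial

/-!
Since `1 - q^{-r} t^r = -q^{-r} (t^r - q^r)` and `t - q` divides `t^r - q^r`, each `α_r` is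
`t - q` times an explicit cofactor `β_r`. Evaluating `β_r` at `t = q` (where the geometric sum
`∑ tⁱ q^{r-1-i}` becomes `r q^{r-1}`) gives `(q^r - 2 + q^{-r}) / q`, i.e. `[r]²` times the value
of `β_1`. So `β_n - [n]² β_1` vanishes at `t = q` and supplies the second factor `t - q`.
-/

namespace LaurentPolynomial

theorem T_sub_C_dvd_of_eval₂_eq_zero {R : Type*} [CommRing R] {a : Rˣ} {f : R[T;T⁻¹]}
    (hf : eval₂ (RingHom.id R) a f = 0) : T 1 - C (a : R) ∣ f := by
  obtain ⟨n, p, hp⟩ := f.exists_T_pow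
  have hroot : p.IsRoot a := by
    simpa [hf] using congrArg (eval₂ (RingHom.id R) a) hp
  have hdvd := map_dvd Polynomial.toLaurent (Polynomial.dvd_iff_isRoot.mpr hroot)
  rw [map_sub, Polynomial.toLaurent_X, Polynomial.toLaurent_C, hp] at hdvd
  exact (isUnit_T (n : ℤ)).dvd_mul_right.mp hdvd

theorem one_sub_C_zpow_neg_mul_T {K : Type*} [Field K] {a : K} (ha : a ≠ 0) (r : ℕ) :
    1 - C (a ^ (-(r : ℤ))) * T (r : ℤ) =
      (T 1 - C a) * (-C (a ^ (-(r : ℤ))) * ∑ i ∈ Finset.range r, T 1 ^ i * C a ^ (r - 1 - i)) := by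
  have hgeom : (∑ i ∈ Finset.range r, T 1 ^ i * C a ^ (r - 1 - i)) * (T 1 - C a) =
      T (r : ℤ) - C (a ^ r) := by
    rw [geom_sum₂_mul, T_pow, mul_one, map_pow]
  have hinv : C (a ^ (-(r : ℤ))) * C (a ^ r) = (1 : K[T;T⁻¹]) := by
    rw [← map_mul, zpow_neg, zpow_natCast, inv_mul_cancel₀ (pow_ne_zero r ha), map_one]
  linear_combination C (a ^ (-(r : ℤ))) * hgeom - hinv

end LaurentPolynomial

lemma qq_sub_two_add_inv_ne_zero : qq - 2 + qq⁻¹ ≠ 0 := by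
  have hq1 : qq - 1 ≠ 0 := by
    rw [sub_ne_zero]
    intro h
    simpa [qq] using congrArg RatFunc.intDegree h
  have h : qq - 2 + qq⁻¹ = (qq - 1) ^ 2 / qq := by
    field_simp [qq_ne_zero]
    ring
  rw [h]
  exact div_ne_zero (pow_ne_zero 2 hq1) qq_ne_zero

def alphaCofactor (r : ℕ) : LaurentPolynomial KK :=
  C ((r : KK)⁻¹) * ((1 - C (qq ^ r)) * (1 - T (-(r : ℤ))) *
    (-C (qq ^ (-(r : ℤ))) * ∑ i ∈ Finset.range r, T 1 ^ i * C qq ^ (r - 1 - i)))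

lemma alphaE_eq_T_sub_C_mul (r : ℕ) : alphaE r = (T 1 - C qq) * alphaCofactor r := by
  rw [alphaE, one_sub_C_zpow_neg_mul_T qq_ne_zero, alphaCofactor]
  ring

lemma eval₂_alphaCofactor (r : ℕ) :
    eval₂ (RingHom.id KK) (Units.mk0 qq qq_ne_zero) (alphaCofactor r) =
      (qq ^ r - 2 + qq ^ (-(r : ℤ))) / qq := by
  cases r with
  | zero => norm_num [alphaCofactor]
  | succ m =>
    simp only [alphaCofactor, map_mul, map_sub, map_neg, map_one, map_sum, map_pow, eval₂_C,
      eval₂_T, RingHom.id_apply, Units.val_inv_eq_inv_val, Units.val_pow_eq_pow_val,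
      Units.val_mk0, zpow_one, zpow_neg, zpow_natCast]
    rw [geom_sum₂_self, Nat.add_sub_cancel]
    field_simp [qq_ne_zero]
    ring

theorem stmt_8_general (n : ℕ) :
    (T 1 - C qq) ^ 2 ∣ (alphaE n - C (qint_sq n) * alphaE 1) := by
  rw [alphaE_eq_T_sub_C_mul, alphaE_eq_T_sub_C_mul, mul_left_comm, ← mul_sub, sq]
  refine mul_dvd_mul_left _ (T_sub_C_dvd_of_eval₂_eq_zero (a := Units.mk0 qq qq_ne_zero) ?_)
  rw [map_sub, map_mul, eval₂_C, eval₂_alphaCofactor, eval₂_alphaCofactor, qint_sq,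
    RingHom.id_apply, Nat.cast_one, pow_one, zpow_neg_one,
    div_mul_div_cancel₀ qq_sub_two_add_inv_ne_zero]
  ring

theorem stmt_8 (n : ℕ) (hn : 1 ≤ n) :
    (T 1 - C qq) ^ 2 ∣ (alphaE n - C (qint_sq n) * alphaE 1) :=
  stmt_8_general n
end
end
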